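/- arXiv:1308.3012 — 2 statements merged into one kernel-verified Lean document; each statement's English description precedes it below -/
import Mathlib

section
/- If (λ, s, t) is a doubly marked partition with spt-crank m and (α, β) = ψ(λ,s,t), then m belongs to the rank-set of α, i.e., there exists g ≥ 1 with g − 1 − α_g = m. -/
open Finset

/-- The `i`-th part (1-indexed) of a partition given as a weakly decreasing list;
`0` if `i` is out of range. -/
def part (l : List ℕ) (i : ℕ) : ℕ := l.getD (i - 1) 0

/-- `conj l s = λ'_s`, the `s`-th part of the conjugate partition:
the number of parts of `l` that are at least `s`. -/
def conj (l : List ℕ) (s : ℕ) : ℕ := l.countP (fun x => s ≤ x)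

/-- A partition represented as a weakly decreasing list of positive integers. -/
def IsPartitionList (l : List ℕ) : Prop := l.Pairwise (· ≥ ·) ∧ ∀ x ∈ l, 0 < x

/-- The side `D(λ)` of the Durfee square: the number of indices `i` with `λ_i ≥ i`. -/
def durfee (l : List ℕ) : ℕ := (List.range l.length).countP (fun i => i + 1 ≤ l.getD i 0)

/-- A doubly marked partition `(λ, s, t)`: `1 ≤ s ≤ D(λ)`, `s ≤ t ≤ λ_1`, `λ'_s = λ'_t`. -/
def IsDoublyMarked (l : List ℕ) (s t : ℕ) : Prop :=
  IsPartitionList l ∧ 1 ≤ s ∧ s ≤ durfee l ∧ s ≤ t ∧ t ≤ part l 1 ∧ conj l s = conj l t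

/-- `g(λ,s,t) = λ'_s - s + 1` (here `s ≤ λ'_s`, so natural subtraction is exact). -/
def sptg (l : List ℕ) (s : ℕ) : ℕ := conj l s - s + 1

/-- The spt-crank `c(λ,s,t) = g - λ_g + t - s`. -/
def sptCrank (l : List ℕ) (s t : ℕ) : ℤ :=
  (sptg l s : ℤ) - part l (sptg l s) + (t : ℤ) - s

/-- The partition `p` of `n` written as a weakly decreasing list. -/
def toList {n : ℕ} (p : n.Partition) : List ℕ := (p.parts.sort (· ≤ ·)).reverse

/-- The smallest part of a partition of `n` (`0` for the empty partition). -/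
def smin {n : ℕ} (p : n.Partition) : ℕ := (p.parts.sort (· ≤ ·)).headD 0

/-- `spt n = Σ_{λ ⊢ n} n_s(λ)`: the total number of occurrences of smallest parts. -/
def spt (n : ℕ) : ℕ := ∑ p : n.Partition, p.parts.count (smin p)

/-- The map `ψ`: `α = (λ_1 - t + s - 1, …, λ_{λ'_s} - t + s - 1, λ_{λ'_s+1}, …, λ_ℓ)`
(as a list of integers) and `β = (λ'_s, λ'_{s+1}, …, λ'_t)`. -/
def psi (l : List ℕ) (s t : ℕ) : List ℤ × List ℕ :=
  ((l.take (conj l s)).map (fun x => (x : ℤ) - t + s - 1) ++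
     (l.drop (conj l s)).map (fun x => (x : ℤ)),
   (List.range (t - s + 1)).map (fun i => conj l (s + i)))

/-! Since `s ≥ 1` and `λ'_s ≥ 1`, the index `g = λ'_s - s + 1` is at most `λ'_s`, so `α_g = λ_g - t + s - 1`
lies in the shifted block of `α`; then `g - 1 - α_g = g - λ_g + t - s` is the spt-crank. -/

lemma conj_pos_of_le_part_one {l : List ℕ} {s : ℕ} (hs : 0 < s) (h : s ≤ part l 1) :
    0 < conj l s := by
  cases l with
  | nil => simp [part] at h; omega
  | cons a l =>
    have has : s ≤ a := h
    simp [conj, has]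

/-- The coercions `List ℕ → List ℤ` in `psi` elaborate as monadic binds; this is the plain form. -/
lemma psi_fst_eq (l : List ℕ) (s t : ℕ) :
    (psi l s t).1 = (l.take (conj l s)).map (fun x : ℕ => (x : ℤ) - t + s - 1) ++
      (l.drop (conj l s)).map (fun x : ℕ => (x : ℤ)) := by
  simp only [psi, List.pure_def, List.bind_eq_flatMap, ← List.map_eq_flatMap, List.map_map]
  rfl

lemma psi_fst_getD_of_lt_conj (l : List ℕ) (s t : ℕ) {i : ℕ} (hi : i < conj l s) :
    (psi l s t).1.getD i 0 = (l.getD i 0 : ℤ) - t + s - 1 := by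
  have hil : i < l.length := hi.trans_le List.countP_le_length
  rw [psi_fst_eq, List.getD_append _ _ _ _ (by rw [List.length_map, List.length_take]; omega)]
  simp [List.getD_eq_getElem?_getD, hi, hil]

lemma sptg_sub_one_lt_conj {l : List ℕ} {s : ℕ} (hs : 0 < s) (hl : 0 < conj l s) :
    sptg l s - 1 < conj l s := by
  unfold sptg
  omega

/-- If `(λ,s,t)` is a doubly marked partition with spt-crank `m` and `(α,β) = ψ(λ,s,t)`,
then `m` belongs to the rank-set of `α`: there is a `g ≥ 1` with `g - 1 - α_g = m`. -/
theorem mem_rankSet_of_sptCrank (l : List ℕ) (s t : ℕ) (m : ℤ)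
    (h : IsDoublyMarked l s t) (hc : sptCrank l s t = m) :
    ∃ g : ℕ, 1 ≤ g ∧ (g : ℤ) - 1 - (psi l s t).1.getD (g - 1) 0 = m := by
  obtain ⟨-, hs, -, hst, ht, -⟩ := h
  have hconj : 0 < conj l s := conj_pos_of_le_part_one hs (hst.trans ht)
  refine ⟨sptg l s, Nat.le_add_left 1 _, ?_⟩
  rw [psi_fst_getD_of_lt_conj l s t (sptg_sub_one_lt_conj hs hconj), ← hc, sptCrank, part]
  ring
end

section
/- Let λ be a partition, s an integer with 1 ≤ s ≤ D(λ), and t an integer with 1 ≤ t ≤ λ_1 such that either t < s or λ'_s > λ'_t (i.e., (λ,s,t) is not a doubly marked partition). Let p be the maximal integer with λ'_p = λ'_s, δ = (λ_1 − p + s − 1, ..., λ_{λ'_s} − p + s − 1, λ_{λ'_s+1}, ..., λ_ℓ), a the minimal integer with δ_a < λ'_s, and μ = (δ_1, ..., δ_{a−1}, λ'_s, ..., λ'_p, δ_a, ..., δ_ℓ). Then μ is a partition of |λ| and 1 ≤ a ≤ D(μ). -/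
open Finset

/-!
Write `c = λ'_s` and `k = p - s + 1`. The maximality of `p` means `λ_c = p`: the first `c` rows
have length at least `p`, and all later rows are shorter than `s`. So shortening each of the first
`c` rows by `k` leaves a weakly decreasing `δ` with `δ_c = s - 1 < c`, and removes exactly `k c`
cells, which come back as the `k` parts `λ'_s = ⋯ = λ'_p = c` inserted into `δ` at their sorted
position `a ≤ c`. The inserted part `μ_a = c ≥ a` shows `a ≤ D(μ)`.
-/

theorem lt_countP_iff_of_pairwise {α : Type*} {r : α → α → Prop} {q : α → Prop}
    [DecidablePred q] {l : List α} (hl : l.Pairwise r) (hq : ∀ x y, r x y → q y → q x)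
    (i : ℕ) : i < l.countP (fun x => q x) ↔ ∃ h : i < l.length, q l[i] := by
  induction l generalizing i with
  | nil => simp
  | cons x l ih =>
    obtain ⟨hx, hl⟩ := List.pairwise_cons.1 hl
    by_cases hqx : q x
    · cases i <;> simp [hqx, ih hl]
    · have hnone : ∀ y ∈ x :: l, ¬ q y := by
        intro y hy hqy
        rcases List.mem_cons.1 hy with rfl | hy
        exacts [hqx hqy, hqx (hq x y (hx y hy) hqy)]
      rw [List.countP_eq_zero.2 (by simpa using hnone)]
      exact iff_of_false (Nat.not_lt_zero i) fun ⟨_, hqi⟩ => hnone _ (List.getElem_mem _) hqi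

theorem List.sum_filter_ne_zero (l : List ℕ) : (l.filter (fun x => x ≠ 0)).sum = l.sum := by
  induction l with
  | nil => rfl
  | cons a l ih => rcases eq_or_ne a 0 with rfl | h <;> simp_all

theorem List.sum_take_append_replicate_append_drop (l : List ℕ) (n k c : ℕ) :
    (l.take n ++ List.replicate k c ++ l.drop n).sum = l.sum + k * c := by
  rw [List.sum_append, List.sum_append, List.sum_replicate_nat, ← List.sum_take_add_sum_drop l n]
  omega

theorem isPartitionList_filter_ne_zero {l : List ℕ} (hl : l.Pairwise (· ≥ ·)) :
    IsPartitionList (l.filter (fun x => x ≠ 0)) :=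
  ⟨hl.filter _, fun x hx => Nat.pos_of_ne_zero (by simpa using (List.mem_filter.1 hx).2)⟩

def trimRows (l : List ℕ) (c k : ℕ) : List ℕ := (l.take c).map (· - k) ++ l.drop c

def insertParts (l : List ℕ) (c k : ℕ) : List ℕ :=
  l.take (conj l c) ++ List.replicate k c ++ l.drop (conj l c)

section Sorted

variable {l : List ℕ}

theorem antitone_getD (hl : l.Pairwise (· ≥ ·)) : Antitone (l.getD · 0) := by
  intro i j hij
  show l.getD j 0 ≤ l.getD i 0
  by_cases hj : j < l.length
  · rw [List.getD_eq_getElem _ _ hj, List.getD_eq_getElem _ _ (hij.trans_lt hj)]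
    rcases hij.eq_or_lt with rfl | hij
    · rfl
    · exact List.pairwise_iff_getElem.1 hl i j _ hj hij
  · rw [List.getD_eq_default _ _ (not_lt.1 hj)]
    exact Nat.zero_le _

theorem getD_pred_le_of_mem_take (hl : l.Pairwise (· ≥ ·)) {n x : ℕ} (hx : x ∈ l.take n) :
    l.getD (n - 1) 0 ≤ x := by
  obtain ⟨i, hi, rfl⟩ := List.getElem_of_mem hx
  rw [List.length_take] at hi
  rw [List.getElem_take, ← List.getD_eq_getElem _ 0]
  exact antitone_getD hl (by omega)

theorem lt_durfee_iff (hl : l.Pairwise (· ≥ ·)) (i : ℕ) :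
    i < durfee l ↔ i + 1 ≤ l.getD i 0 := by
  rw [durfee, lt_countP_iff_of_pairwise (List.pairwise_lt_range (n := l.length))
    fun x y hxy hy => ((Nat.succ_le_succ hxy.le).trans hy).trans (antitone_getD hl hxy.le)]
  by_cases hi : i < l.length <;> simp [hi]

theorem conj_antitone (l : List ℕ) : Antitone (conj l) := fun _ _ hmn =>
  List.countP_mono_left fun _ _ h => by simp only [decide_eq_true_eq] at h ⊢; omega

theorem lt_conj_iff (hl : l.Pairwise (· ≥ ·)) {m : ℕ} (hm : 0 < m) (i : ℕ) :
    i < conj l m ↔ m ≤ l.getD i 0 := by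
  rw [conj, lt_countP_iff_of_pairwise hl fun x y hxy hy => le_trans hy hxy]
  by_cases hi : i < l.length
  · simp [hi]
  · simp [hi, hm.ne']

theorem le_of_mem_take_conj (hl : l.Pairwise (· ≥ ·)) {m x : ℕ} (hx : x ∈ l.take (conj l m)) :
    m ≤ x := by
  obtain ⟨i, hi, rfl⟩ := List.getElem_of_mem hx
  rw [List.length_take] at hi
  obtain ⟨_, h⟩ := (lt_countP_iff_of_pairwise hl (fun x y hxy hy => le_trans hy hxy) i).1
    (lt_of_lt_of_le hi (min_le_left _ _))
  simpa using h

theorem lt_of_mem_drop_conj (hl : l.Pairwise (· ≥ ·)) {m x : ℕ} (hx : x ∈ l.drop (conj l m)) :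
    x < m := by
  obtain ⟨i, hi, rfl⟩ := List.getElem_of_mem hx
  rw [List.getElem_drop]
  refine not_le.1 fun h => ?_
  have := (lt_countP_iff_of_pairwise hl (fun x y hxy hy => le_trans hy hxy) _).2 ⟨_, h⟩
  exact absurd this (Nat.not_lt.2 (Nat.le_add_right _ _))

theorem le_conj_of_le_durfee (hl : l.Pairwise (· ≥ ·)) {s : ℕ} (hs : s ≤ durfee l) :
    s ≤ conj l s := by
  rcases Nat.eq_zero_or_pos s with rfl | hs0
  · exact Nat.zero_le _
  · have := (lt_conj_iff hl hs0 (s - 1)).2 <| by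
      have := (lt_durfee_iff hl (s - 1)).1 (by omega)
      omega
    omega

theorem conj_eq_of_le_getD (hl : l.Pairwise (· ≥ ·)) {s x : ℕ} (hs : 0 < s) (hsx : s ≤ x)
    (hx : x ≤ l.getD (conj l s - 1) 0) : conj l x = conj l s := by
  have hc : 0 < conj l s := (lt_conj_iff hl hs 0).2 <|
    hsx.trans (hx.trans (antitone_getD hl (Nat.zero_le _)))
  have := (lt_conj_iff hl (hs.trans_le hsx) (conj l s - 1)).2 hx
  have := conj_antitone l hsx
  omega

theorem findGreatest_conj_eq (hl : l.Pairwise (· ≥ ·)) {s : ℕ} (hs : 0 < s)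
    (hsl : s ≤ part l 1) :
    Nat.findGreatest (fun x => conj l x = conj l s) (part l 1) = l.getD (conj l s - 1) 0 := by
  have hc : 0 < conj l s := (lt_conj_iff hl hs 0).2 hsl
  have hsc : s ≤ l.getD (conj l s - 1) 0 := (lt_conj_iff hl hs _).1 (by omega)
  have hle : l.getD (conj l s - 1) 0 ≤ part l 1 := antitone_getD hl (Nat.zero_le _)
  refine Nat.findGreatest_eq_iff.2 ⟨hle, fun _ => conj_eq_of_le_getD hl hs hsc le_rfl,
    fun x hx _ hconj => ?_⟩
  have := (lt_conj_iff hl (hs.trans_le hsc |>.trans hx) (conj l s - 1)).not.2 (by omega)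
  omega

theorem map_range_conj_eq_replicate (hl : l.Pairwise (· ≥ ·)) {s : ℕ} (hs : 0 < s) :
    (List.range (l.getD (conj l s - 1) 0 + 1 - s)).map (fun i => conj l (s + i)) =
      List.replicate (l.getD (conj l s - 1) 0 + 1 - s) (conj l s) := by
  refine List.eq_replicate_iff.2 ⟨by simp, ?_⟩
  simp only [List.mem_map, List.mem_range]
  rintro _ ⟨i, hi, rfl⟩
  exact conj_eq_of_le_getD hl hs (Nat.le_add_right s i) (by omega)

theorem pairwise_trimRows (hl : l.Pairwise (· ≥ ·)) {c k : ℕ}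
    (h : ∀ x ∈ l.take c, ∀ y ∈ l.drop c, y + k ≤ x) : (trimRows l c k).Pairwise (· ≥ ·) := by
  refine List.pairwise_append.2 ⟨(hl.sublist (List.take_sublist _ _)).map _
    fun a b hab => Nat.sub_le_sub_right hab k, hl.sublist (List.drop_sublist _ _), ?_⟩
  intro x hx y hy
  obtain ⟨x, hx', rfl⟩ := List.mem_map.1 hx
  have := h x hx' y hy
  omega

theorem sum_trimRows {c k : ℕ} (hc : c ≤ l.length) (h : ∀ x ∈ l.take c, k ≤ x) :
    (trimRows l c k).sum + c * k = l.sum := by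
  have hsub : ((l.take c).map (· - k)).sum + c * k = (l.take c).sum := by
    conv_rhs => rw [← List.map_id' (l.take c), ← List.map_congr_left fun x hx =>
      Nat.sub_add_cancel (h x hx)]
    rw [List.sum_map_add, List.map_const', List.sum_replicate, List.length_take,
      min_eq_left hc, smul_eq_mul]
  rw [trimRows, List.sum_append, ← List.sum_take_add_sum_drop l c]
  omega

theorem getD_trimRows {c k i : ℕ} (hi : i < c) : (trimRows l c k).getD i 0 = l.getD i 0 - k := by
  by_cases hil : i < l.length
  · simp [trimRows, List.getElem?_append, hi, hil]
  · rw [List.getD_eq_default _ _ (by simp [trimRows]; omega),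
      List.getD_eq_default _ _ (by omega), Nat.zero_sub]

theorem pairwise_trimRows_conj (hl : l.Pairwise (· ≥ ·)) {s p : ℕ}
    (hp : l.getD (conj l s - 1) 0 = p) (hsp : s ≤ p) :
    (trimRows l (conj l s) (p + 1 - s)).Pairwise (· ≥ ·) :=
  pairwise_trimRows hl fun x hx y hy => by
    have := hp ▸ getD_pred_le_of_mem_take hl hx
    have := lt_of_mem_drop_conj hl hy
    omega

theorem sum_trimRows_conj (hl : l.Pairwise (· ≥ ·)) {s p : ℕ} (hs : 0 < s)
    (hp : l.getD (conj l s - 1) 0 = p) :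
    (trimRows l (conj l s) (p + 1 - s)).sum + conj l s * (p + 1 - s) = l.sum :=
  sum_trimRows List.countP_le_length fun x hx => by
    have := hp ▸ getD_pred_le_of_mem_take hl hx
    omega

theorem conj_trimRows_conj_lt (hl : l.Pairwise (· ≥ ·)) {s p : ℕ} (hs : 0 < s)
    (hsc : s ≤ conj l s) (hp : l.getD (conj l s - 1) 0 = p) (hsp : s ≤ p) :
    conj (trimRows l (conj l s) (p + 1 - s)) (conj l s) < conj l s := by
  have := (lt_conj_iff (pairwise_trimRows_conj hl hp hsp) (m := conj l s) (by omega)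
    (conj l s - 1)).not.2 <| by
      rw [getD_trimRows (by omega), hp]
      omega
  omega

theorem pairwise_insertParts (hl : l.Pairwise (· ≥ ·)) (c k : ℕ) :
    (insertParts l c k).Pairwise (· ≥ ·) := by
  refine List.pairwise_append.2 ⟨List.pairwise_append.2 ⟨hl.sublist (List.take_sublist _ _),
    List.pairwise_replicate.2 (Or.inr le_rfl), ?_⟩, hl.sublist (List.drop_sublist _ _), ?_⟩
  · intro x hx y hy
    rw [List.eq_of_mem_replicate hy]
    exact le_of_mem_take_conj hl hx
  · intro x hx y hy
    have := lt_of_mem_drop_conj hl hy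
    rcases List.mem_append.1 hx with hx | hx
    · exact (this.trans_le (le_of_mem_take_conj hl hx)).le
    · exact (List.eq_of_mem_replicate hx).symm ▸ this.le

theorem conj_lt_durfee_filter_insertParts (hl : l.Pairwise (· ≥ ·)) {c k : ℕ}
    (hk : 0 < k) (hc : conj l c < c) :
    conj l c < durfee ((insertParts l c k).filter (fun x => x ≠ 0)) := by
  have hA : (l.take (conj l c)).filter (fun x => x ≠ 0) = l.take (conj l c) :=
    List.filter_eq_self.2 fun x hx => by
      have := le_of_mem_take_conj hl hx
      simp only [ne_eq, decide_eq_true_eq]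
      omega
  have hB : (List.replicate k c).filter (fun x => x ≠ 0) = List.replicate k c :=
    List.filter_eq_self.2 fun x hx => by
      simp only [List.eq_of_mem_replicate hx, ne_eq, decide_eq_true_eq]
      omega
  have hlen : (l.take (conj l c)).length = conj l c :=
    List.length_take_of_le List.countP_le_length
  rw [lt_durfee_iff ((pairwise_insertParts hl c k).filter _), insertParts,
    List.filter_append, List.filter_append, hA, hB, List.append_assoc,
    List.getD_append_right _ _ _ _ hlen.le, hlen, Nat.sub_self,
    List.getD_append _ _ _ _ (by simpa using hk),
    List.getD_eq_getElem _ _ (by simpa using hk), List.getElem_replicate]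
  omega

end Sorted

theorem tau_image_general (l : List ℕ) (s : ℕ) (hl : IsPartitionList l)
    (hs1 : 1 ≤ s) (hsD : s ≤ durfee l) :
    ∀ p δ a μ,
      p = Nat.findGreatest (fun x => conj l x = conj l s) (part l 1) →
      δ = (l.take (conj l s)).map (fun x => x - (p + 1 - s)) ++ l.drop (conj l s) →
      a = δ.countP (fun x => conj l s ≤ x) + 1 →
      μ = (δ.take (a - 1) ++ (List.range (p + 1 - s)).map (fun i => conj l (s + i)) ++
            δ.drop (a - 1)).filter (fun x => x ≠ 0) →
      IsPartitionList μ ∧ μ.sum = l.sum ∧ 1 ≤ a ∧ a ≤ durfee μ := by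
  intro p δ a μ hp hδ ha hμ
  have hsc : s ≤ conj l s := le_conj_of_le_durfee hl.1 hsD
  have hpc : l.getD (conj l s - 1) 0 = p :=
    (hp.trans (findGreatest_conj_eq hl.1 hs1 ((lt_conj_iff hl.1 hs1 0).1 (by omega)))).symm
  have hsp : s ≤ p := hpc ▸ (lt_conj_iff hl.1 hs1 _).1 (by omega)
  replace hδ : δ = trimRows l (conj l s) (p + 1 - s) := hδ
  replace ha : a = conj δ (conj l s) + 1 := ha
  have hδsorted : δ.Pairwise (· ≥ ·) := hδ ▸ pairwise_trimRows_conj hl.1 hpc hsp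
  have hδc : conj δ (conj l s) < conj l s := hδ ▸ conj_trimRows_conj_lt hl.1 hs1 hsc hpc hsp
  replace hμ : μ = (insertParts δ (conj l s) (p + 1 - s)).filter (fun x => x ≠ 0) := by
    rw [hμ, ha, Nat.add_sub_cancel, ← hpc, map_range_conj_eq_replicate hl.1 hs1]
    rfl
  subst hμ
  refine ⟨isPartitionList_filter_ne_zero (pairwise_insertParts hδsorted _ _), ?_, by omega, ?_⟩
  · rw [List.sum_filter_ne_zero, insertParts, List.sum_take_append_replicate_append_drop, hδ,
      mul_comm, sum_trimRows_conj hl.1 hs1 hpc]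
  · have := conj_lt_durfee_filter_insertParts hδsorted (k := p + 1 - s) (by omega) hδc
    omega

/-- Lemma 3.1 (first part): if `(λ,s,t)` satisfies `1 ≤ s ≤ D(λ)`, `1 ≤ t ≤ λ_1` and is
not a doubly marked partition (`t < s` or `λ'_s > λ'_t`), let `p` be the maximal integer
with `λ'_p = λ'_s`, let `δ = (λ_1-p+s-1, …, λ_{λ'_s}-p+s-1, λ_{λ'_s+1}, …, λ_ℓ)`,
let `a` be the minimal integer with `δ_a < λ'_s` (since `δ` is weakly decreasing,
`a = #{i : δ_i ≥ λ'_s} + 1`), and let `μ = (δ_1, …, δ_{a-1}, λ'_s, …, λ'_p, δ_a, …, δ_ℓ)`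
(zero parts removed). Then `μ` is a partition of `|λ|` and `1 ≤ a ≤ D(μ)`. -/
theorem tau_image (l : List ℕ) (s t : ℕ) (hl : IsPartitionList l)
    (hs1 : 1 ≤ s) (hsD : s ≤ durfee l) (ht1 : 1 ≤ t) (ht : t ≤ part l 1)
    (hnd : t < s ∨ conj l t < conj l s) :
    ∀ p δ a μ,
      p = Nat.findGreatest (fun x => conj l x = conj l s) (part l 1) →
      δ = (l.take (conj l s)).map (fun x => x - (p + 1 - s)) ++ l.drop (conj l s) →
      a = δ.countP (fun x => conj l s ≤ x) + 1 →
      μ = (δ.take (a - 1) ++ (List.range (p + 1 - s)).map (fun i => conj l (s + i)) ++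
            δ.drop (a - 1)).filter (fun x => x ≠ 0) →
      IsPartitionList μ ∧ μ.sum = l.sum ∧ 1 ≤ a ∧ a ≤ durfee μ :=
  tau_image_general l s hl hs1 hsD
end
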